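/- The group PGL(3, ℤ/4ℤ) acts simply transitively (regularly) on the set of ordered quadrangles of PHG(2, ℤ/4ℤ). -/
import Mathlib


/-- A point of a projective Hjelmslev geometry PHG(n-1, R): a free rank-1 submodule
of Rⁿ, i.e. the R-span of a vector having at least one unit coordinate. -/
def IsPoint {R : Type} [CommRing R] {n : ℕ} (P : Submodule R (Fin n → R)) : Prop :=
  ∃ v : Fin n → R, (∃ i, IsUnit (v i)) ∧ P = Submodule.span R {v}

/-- A free rank-k submodule of Rⁿ: a submodule linearly isomorphic to Rᵏ. -/
def IsFreeRank {R : Type} [CommRing R] {n : ℕ} (k : ℕ) (L : Submodule R (Fin n → R)) : Prop :=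
  Nonempty ((Fin k → R) ≃ₗ[R] L)

/-- A line of PHG(2, R): a free rank-2 submodule of R³. -/
abbrev IsLine {R : Type} [CommRing R] (L : Submodule R (Fin 3 → R)) : Prop := IsFreeRank 2 L

abbrev R4 := ZMod 4

abbrev GL3 := GL (Fin 3) R4

/-- The subgroup {I, -I} of scalar matrices of GL(3, ℤ/4ℤ)
(the units of ℤ/4ℤ are ±1). -/
def pmOne : Subgroup GL3 where
  carrier := {1, -1}
  one_mem' := Or.inl rfl
  mul_mem' := by rintro a b (rfl | rfl) (rfl | rfl) <;> simp
  inv_mem' := by rintro a (rfl | rfl) <;> simp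

instance : pmOne.Normal := by
  constructor
  rintro n (rfl | rfl) g
  · simpa using pmOne.one_mem
  · right
    simp [mul_neg, neg_mul, Set.mem_singleton_iff]

/-- PGL(3, ℤ/4ℤ): GL(3, ℤ/4ℤ) modulo its subgroup of scalar matrices {I, -I}. -/
abbrev PGL3 := GL3 ⧸ pmOne

/-- A matrix maps a point (the span of a vector) to the span of the image vector;
equivalently, it maps a submodule to its image. -/
def mapPt (g : GL3) (P : Submodule R4 (Fin 3 → R4)) : Submodule R4 (Fin 3 → R4) :=
  P.map (Matrix.mulVecLin (g : Matrix (Fin 3) (Fin 3) R4))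

lemma mapPt_neg (h : GL3) (P : Submodule R4 (Fin 3 → R4)) : mapPt (-h) P = mapPt h P := by
  unfold mapPt
  have : Matrix.mulVecLin ((-h : GL3) : Matrix (Fin 3) (Fin 3) R4)
      = -Matrix.mulVecLin ((h : GL3) : Matrix (Fin 3) (Fin 3) R4) := by
    ext v i
    simp [Matrix.neg_mulVec]
  rw [this, Submodule.map_neg]

/-- The induced action of PGL(3, ℤ/4ℤ) on points of PHG(2, ℤ/4ℤ). -/
def pglMapPt (g : PGL3) (P : Submodule R4 (Fin 3 → R4)) : Submodule R4 (Fin 3 → R4) :=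
  Quotient.liftOn' g (fun h => mapPt h P) (by
    intro a b hab
    rw [QuotientGroup.leftRel_apply] at hab
    rcases hab with h1 | h1
    · have hb : b = a := by
        have h2 := mul_inv_cancel_left a b
        rw [h1, mul_one] at h2
        exact h2.symm
      rw [hb]
    · rw [Set.mem_singleton_iff] at h1
      have hb : b = -a := by
        have h2 := mul_inv_cancel_left a b
        rw [h1, mul_neg, mul_one] at h2
        exact h2.symm
      rw [hb]
      exact (mapPt_neg a P).symm)

/-- The induced action of PGL(3, ℤ/4ℤ) on sets of points. -/
def pglMapSet (g : PGL3) (H : Set (Submodule R4 (Fin 3 → R4))) : Set (Submodule R4 (Fin 3 → R4)) :=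
  pglMapPt g '' H

/-- Reduction mod 2 on ℤ/4ℤ. -/
def red2 : ZMod 4 →+* ZMod 2 := ZMod.castHom (show (2:ℕ) ∣ 4 by norm_num) (ZMod 2)

instance : RingHomSurjective red2 :=
  ⟨fun y => by
    fin_cases y
    · exact ⟨0, map_zero _⟩
    · exact ⟨1, map_one _⟩⟩

/-- Coordinatewise reduction mod 2, as a semilinear map (Fin 3 → ℤ/4ℤ) → (Fin 3 → 𝔽₂). -/
def redMap : (Fin 3 → ZMod 4) →ₛₗ[red2] (Fin 3 → ZMod 2) where
  toFun v := fun i => red2 (v i)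
  map_add' := by intros; funext i; simp
  map_smul' := by intros; funext i; simp [Pi.smul_apply, smul_eq_mul]

/-- The neighbour class of a point, viewed as a point of the quotient plane PG(2,𝔽₂):
the 𝔽₂-line of 𝔽₂³ spanned by the coordinatewise reduction mod 2. -/
def redPt (P : Submodule R4 (Fin 3 → R4)) : Submodule (ZMod 2) (Fin 3 → ZMod 2) :=
  Submodule.map redMap P

/-- Three points of PG(2,𝔽₂) (given as subspaces of 𝔽₂³) are collinear iff together
they span a subspace of dimension at most 2. -/
def CollinearF2 (A B C : Submodule (ZMod 2) (Fin 3 → ZMod 2)) : Prop :=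
  Module.finrank (ZMod 2) ↥(A ⊔ B ⊔ C) ≤ 2

/-- An ordered quadrangle of PHG(2, ℤ/4ℤ): a 4-tuple of points lying in four pairwise
distinct neighbour classes, no three of which are collinear in PG(2,𝔽₂). -/
def IsQuadrangleT (Q : Fin 4 → Submodule R4 (Fin 3 → R4)) : Prop :=
  (∀ i, IsPoint (Q i)) ∧
  (∀ i j, i ≠ j → redPt (Q i) ≠ redPt (Q j)) ∧
  ∀ i j k, i ≠ j → i ≠ k → j ≠ k → ¬ CollinearF2 (redPt (Q i)) (redPt (Q j)) (redPt (Q k))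

/-! ### Auxiliary material for the proof -/

section Aux

open Submodule Matrix

abbrev V4 := Fin 3 → R4
abbrev V2 := Fin 3 → ZMod 2

/-- `Spans3 u v w` : every vector of `𝔽₂³` is a combination of `u, v, w`. -/
def Spans3 (u v w : V2) : Prop :=
  ∀ x : V2, ∃ a b c : ZMod 2, x = a • u + b • v + c • w

/-- `NotInPair x u v` : `x` is not an `𝔽₂`-combination of `u` and `v`. -/
def NotInPair (x u v : V2) : Prop :=
  ∀ a b : ZMod 2, x ≠ a • u + b • v

instance (u v w : V2) : Decidable (Spans3 u v w) := by unfold Spans3; infer_instance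
instance (x u v : V2) : Decidable (NotInPair x u v) := by unfold NotInPair; infer_instance

set_option synthInstance.maxSize 2000 in
set_option synthInstance.maxHeartbeats 1000000 in
set_option maxHeartbeats 4000000 in
/-- The key finite check over `𝔽₂`: if `w0 w1 w2` span and `w3` is outside all three
coordinate "lines", then the determinant is nonzero and `w3 = w0 + w1 + w2`. -/
theorem keyF2 : ∀ w0 w1 w2 w3 : V2,
    Spans3 w0 w1 w2 → NotInPair w3 w0 w1 → NotInPair w3 w0 w2 → NotInPair w3 w1 w2 →
    (w0 0 * w1 1 * w2 2 - w0 0 * w2 1 * w1 2 - w1 0 * w0 1 * w2 2 + w1 0 * w2 1 * w0 2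
      + w2 0 * w0 1 * w1 2 - w2 0 * w1 1 * w0 2) ≠ 0 ∧ w3 = w0 + w1 + w2 := by
  decide

lemma unit_one_or_three : ∀ t s : R4, t * s = 1 → t = 1 ∨ t = 3 := by decide

lemma isUnit_of_red {x : R4} (h : red2 x ≠ 0) : IsUnit x := by
  have hx : x = 1 ∨ x = 3 := by revert h; revert x; decide
  rcases hx with rfl | rfl
  · exact isUnit_one
  · exact ⟨⟨3, 3, by decide, by decide⟩, rfl⟩

lemma mapPt_span (g : GL3) (v : V4) :
    mapPt g (Submodule.span R4 {v}) =
      Submodule.span R4 {(g : Matrix (Fin 3) (Fin 3) R4).mulVec v} := by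
  unfold mapPt
  rw [Submodule.map_span, Set.image_singleton, Matrix.mulVecLin_apply]

lemma mapPt_mul (g h : GL3) (P : Submodule R4 V4) :
    mapPt (g * h) P = mapPt g (mapPt h P) := by
  unfold mapPt
  rw [Units.val_mul, Matrix.mulVecLin_mul, Submodule.map_comp]

lemma mapPt_one (P : Submodule R4 V4) : mapPt 1 P = P := by
  unfold mapPt
  simp [Matrix.mulVecLin_one]

lemma mapPt_inv_cancel (g : GL3) (P : Submodule R4 V4) : mapPt g⁻¹ (mapPt g P) = P := by
  rw [← mapPt_mul, inv_mul_cancel, mapPt_one]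

lemma redPt_span (v : V4) :
    redPt (Submodule.span R4 {v}) = Submodule.span (ZMod 2) {redMap v} := by
  unfold redPt
  rw [Submodule.map_span, Set.image_singleton]

lemma sup_span_triple (u v w : V2) :
    Submodule.span (ZMod 2) {u} ⊔ Submodule.span (ZMod 2) {v} ⊔ Submodule.span (ZMod 2) {w}
      = Submodule.span (ZMod 2) {u, v, w} := by
  rw [Submodule.span_insert, Submodule.span_insert, sup_assoc]

lemma col_of_pair {u v x : V2} (a b : ZMod 2) (hx : x = a • u + b • v) :
    CollinearF2 (Submodule.span (ZMod 2) {u}) (Submodule.span (ZMod 2) {v})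
      (Submodule.span (ZMod 2) {x}) := by
  unfold CollinearF2
  have hle : Submodule.span (ZMod 2) {u} ⊔ Submodule.span (ZMod 2) {v}
      ⊔ Submodule.span (ZMod 2) {x} ≤ Submodule.span (ZMod 2) ({u, v} : Set V2) := by
    refine sup_le (sup_le ?_ ?_) ?_ <;> rw [Submodule.span_le, Set.singleton_subset_iff]
    · exact Submodule.subset_span (Set.mem_insert _ _)
    · exact Submodule.subset_span (Set.mem_insert_of_mem _ rfl)
    · exact Submodule.mem_span_pair.mpr ⟨a, b, hx.symm⟩
  refine le_trans (Submodule.finrank_mono hle) ?_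
  refine le_trans (finrank_span_le_card _) ?_
  rw [Set.toFinset_insert, Set.toFinset_singleton]
  exact le_trans (Finset.card_insert_le _ _) (by simp)

lemma spans3_of {u v w : V2} (h : Submodule.span (ZMod 2) {u, v, w} = ⊤) :
    Spans3 u v w := by
  intro x
  have hx : x ∈ Submodule.span (ZMod 2) ({u, v, w} : Set V2) := h ▸ Submodule.mem_top
  rw [show ({u, v, w} : Set V2) = insert u {v, w} from rfl, Submodule.mem_span_insert] at hx
  obtain ⟨a, z, hz, rfl⟩ := hx
  obtain ⟨b, c, hbc⟩ := Submodule.mem_span_pair.mp hz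
  exact ⟨a, b, c, by rw [← hbc, add_assoc]⟩

lemma top_of_noncol {u v w : V2}
    (h : ¬ CollinearF2 (Submodule.span (ZMod 2) {u}) (Submodule.span (ZMod 2) {v})
      (Submodule.span (ZMod 2) {w})) :
    Submodule.span (ZMod 2) {u, v, w} = ⊤ := by
  unfold CollinearF2 at h
  rw [sup_span_triple] at h
  apply Submodule.eq_top_of_finrank_eq
  have h1 : Module.finrank (ZMod 2) (Submodule.span (ZMod 2) ({u, v, w} : Set V2))
      ≤ Module.finrank (ZMod 2) V2 := Submodule.finrank_le _
  have h2 : Module.finrank (ZMod 2) V2 = 3 := Module.finrank_fin_fun _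
  have h3 : 2 < Module.finrank (ZMod 2)
      (Submodule.span (ZMod 2) ({u, v, w} : Set V2)) := Nat.lt_of_not_le h
  omega

/-- The standard quadrangle's generating vectors. -/
def stdv : Fin 4 → V4 := ![![1, 0, 0], ![0, 1, 0], ![0, 0, 1], ![1, 1, 1]]

lemma red_mulVec (A : Matrix (Fin 3) (Fin 3) R4) (x : V4) :
    redMap (A.mulVec x) = (A.map red2).mulVec (fun i => red2 (x i)) := by
  funext i
  show red2 _ = _
  simp [Matrix.mulVec, dotProduct, Matrix.map_apply, map_sum]

/-- Transitivity: some `g : GL3` carries the standard quadrangle to `Q`. -/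
lemma exists_map_std (Q : Fin 4 → Submodule R4 V4) (hQ : IsQuadrangleT Q) :
    ∃ g : GL3, ∀ i, mapPt g (Submodule.span R4 {stdv i}) = Q i := by
  obtain ⟨hpt, hdist, hcol⟩ := hQ
  choose v hv hQv using hpt
  set w : Fin 4 → V2 := fun i => redMap (v i) with hwdef
  have hred : ∀ i, redPt (Q i) = Submodule.span (ZMod 2) {w i} := fun i => by
    rw [hQv i, redPt_span]
  have hNIP : ∀ i j k : Fin 4, i ≠ j → i ≠ k → j ≠ k → NotInPair (w k) (w i) (w j) := by
    intro i j k hij hik hjk a b hx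
    exact hcol i j k hij hik hjk (by rw [hred i, hred j, hred k]; exact col_of_pair a b hx)
  have hSp : Spans3 (w 0) (w 1) (w 2) := by
    apply spans3_of
    apply top_of_noncol
    rw [← hred 0, ← hred 1, ← hred 2]
    exact hcol 0 1 2 (by decide) (by decide) (by decide)
  obtain ⟨hdet, hsum⟩ := keyF2 (w 0) (w 1) (w 2) (w 3) hSp
    (hNIP 0 1 3 (by decide) (by decide) (by decide))
    (hNIP 0 2 3 (by decide) (by decide) (by decide))
    (hNIP 1 2 3 (by decide) (by decide) (by decide))
  -- the matrix with columns v 0, v 1, v 2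
  set M : Matrix (Fin 3) (Fin 3) R4 := Matrix.of (fun i j => ![v 0, v 1, v 2] j i) with hMdef
  set W : Matrix (Fin 3) (Fin 3) (ZMod 2) := M.map red2 with hWdef
  have hWdet : W.det ≠ 0 := by
    have : W.det = w 0 0 * w 1 1 * w 2 2 - w 0 0 * w 2 1 * w 1 2 - w 1 0 * w 0 1 * w 2 2
        + w 1 0 * w 2 1 * w 0 2 + w 2 0 * w 0 1 * w 1 2 - w 2 0 * w 1 1 * w 0 2 := by
      rw [Matrix.det_fin_three]
      rfl
    rw [this]
    exact hdet
  have hMdet : IsUnit M.det := by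
    apply isUnit_of_red
    rw [RingHom.map_det]
    exact hWdet
  set c : V4 := M⁻¹.mulVec (v 3) with hcdef
  have hMc : M.mulVec c = v 3 := by
    rw [hcdef, Matrix.mulVec_mulVec, Matrix.mul_nonsing_inv M hMdet, Matrix.one_mulVec]
  -- the reduction of c is the all-ones vector
  have hWc : W.mulVec (fun i => red2 (c i)) = W.mulVec (fun _ => 1) := by
    have h1 : W.mulVec (fun i => red2 (c i)) = redMap (M.mulVec c) := (red_mulVec M c).symm
    rw [h1, hMc]
    funext i
    have h2 : redMap (v 3) i = (w 0 + w 1 + w 2) i := by rw [← hsum]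
    rw [h2]
    show w 0 i + w 1 i + w 2 i = _
    simp only [Matrix.mulVec, dotProduct, Fin.sum_univ_three, mul_one]
    rfl
  have hWinj : Function.Injective W.mulVec :=
    Matrix.mulVec_injective_iff_isUnit.mpr
      ((Matrix.isUnit_iff_isUnit_det W).mpr (isUnit_iff_ne_zero.mpr hWdet))
  have hc1 : ∀ j, red2 (c j) = 1 := fun j => congrFun (hWinj hWc) j
  have hcu : ∀ j, IsUnit (c j) := fun j => isUnit_of_red (by rw [hc1 j]; exact one_ne_zero)
  -- the matrix with columns c j • v j
  set N : Matrix (Fin 3) (Fin 3) R4 := M * Matrix.diagonal c with hNdef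
  have hNdet : IsUnit N.det := by
    rw [hNdef, Matrix.det_mul, Matrix.det_diagonal, Fin.prod_univ_three]
    exact hMdet.mul (((hcu 0).mul (hcu 1)).mul (hcu 2))
  have hNu : IsUnit N := (Matrix.isUnit_iff_isUnit_det N).mpr hNdet
  refine ⟨hNu.unit, ?_⟩
  have hNval : (hNu.unit : Matrix (Fin 3) (Fin 3) R4) = N := hNu.unit_spec
  have hNentry : ∀ i j, N i j = c j * ![v 0, v 1, v 2] j i := by
    intro i j
    rw [hNdef]
    simp only [Matrix.mul_apply, Matrix.diagonal, Fin.sum_univ_three, Matrix.of_apply]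
    fin_cases j <;> simp [hMdef, mul_comm]
  have hcol0 : N.mulVec (stdv 0) = c 0 • v 0 := by
    funext i
    simp [Matrix.mulVec, dotProduct, Fin.sum_univ_three, stdv, hNentry]
  have hcol1 : N.mulVec (stdv 1) = c 1 • v 1 := by
    funext i
    simp [Matrix.mulVec, dotProduct, Fin.sum_univ_three, stdv, hNentry]
  have hcol2 : N.mulVec (stdv 2) = c 2 • v 2 := by
    funext i
    simp [Matrix.mulVec, dotProduct, Fin.sum_univ_three, stdv, hNentry]
  have hcol3 : N.mulVec (stdv 3) = v 3 := by
    rw [← hMc]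
    funext i
    simp [Matrix.mulVec, dotProduct, Fin.sum_univ_three, stdv, hNentry, hMdef, mul_comm]
  have hfinal : ∀ i, Submodule.span R4 {N.mulVec (stdv i)} = Q i := by
    intro i
    fin_cases i
    · show Submodule.span R4 {N.mulVec (stdv 0)} = Q 0
      rw [hcol0, Submodule.span_singleton_smul_eq (hcu 0), hQv 0]
    · show Submodule.span R4 {N.mulVec (stdv 1)} = Q 1
      rw [hcol1, Submodule.span_singleton_smul_eq (hcu 1), hQv 1]
    · show Submodule.span R4 {N.mulVec (stdv 2)} = Q 2
      rw [hcol2, Submodule.span_singleton_smul_eq (hcu 2), hQv 2]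
    · show Submodule.span R4 {N.mulVec (stdv 3)} = Q 3
      rw [hcol3, hQv 3]
  intro i
  rw [mapPt_span, hNval]
  exact hfinal i

/-- The stabiliser of the standard quadrangle is `{1, -1}`. -/
lemma stab_std (g : GL3) (h : ∀ i, mapPt g (Submodule.span R4 {stdv i})
    = Submodule.span R4 {stdv i}) : g ∈ pmOne := by
  set N : Matrix (Fin 3) (Fin 3) R4 := (g : Matrix (Fin 3) (Fin 3) R4) with hNdef
  have hmem : ∀ i, N.mulVec (stdv i) ∈ Submodule.span R4 {stdv i} := by
    intro i
    rw [← h i, mapPt_span]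
    exact Submodule.mem_span_singleton_self _
  have ha : ∀ i, ∃ a : R4, N.mulVec (stdv i) = a • stdv i := fun i => by
    obtain ⟨a, haa⟩ := Submodule.mem_span_singleton.mp (hmem i)
    exact ⟨a, haa.symm⟩
  obtain ⟨a0, h0⟩ := ha 0
  obtain ⟨a1, h1⟩ := ha 1
  obtain ⟨a2, h2⟩ := ha 2
  obtain ⟨t, h3⟩ := ha 3
  have e0 : ∀ i, N i 0 = a0 * stdv 0 i := by
    intro i
    have := congrFun h0 i
    simpa [Matrix.mulVec, dotProduct, Fin.sum_univ_three, stdv] using this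
  have e1 : ∀ i, N i 1 = a1 * stdv 1 i := by
    intro i
    have := congrFun h1 i
    simpa [Matrix.mulVec, dotProduct, Fin.sum_univ_three, stdv] using this
  have e2 : ∀ i, N i 2 = a2 * stdv 2 i := by
    intro i
    have := congrFun h2 i
    simpa [Matrix.mulVec, dotProduct, Fin.sum_univ_three, stdv] using this
  have e3 : ∀ i, N i 0 + N i 1 + N i 2 = t * stdv 3 i := by
    intro i
    have := congrFun h3 i
    simpa [Matrix.mulVec, dotProduct, Fin.sum_univ_three, stdv] using this
  have ht0 : a0 = t := by have := e3 0; rw [e0 0, e1 0, e2 0] at this; simpa [stdv] using this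
  have ht1 : a1 = t := by have := e3 1; rw [e0 1, e1 1, e2 1] at this; simpa [stdv] using this
  have ht2 : a2 = t := by have := e3 2; rw [e0 2, e1 2, e2 2] at this; simpa [stdv, Matrix.vecHead, Matrix.vecTail] using this
  have hNij : ∀ i j, N i j = if i = j then t else 0 := by
    intro i j
    fin_cases i <;> fin_cases j <;>
      simp_all [stdv, e0, e1, e2]
  -- t is a unit
  have hNu : IsUnit N := ⟨g, rfl⟩
  have hdet : IsUnit (N.det) := (Matrix.isUnit_iff_isUnit_det N).mp hNu
  have hdet3 : N.det = t * t * t := by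
    rw [Matrix.det_fin_three]
    simp [hNij]
  rw [hdet3] at hdet
  obtain ⟨s, hs⟩ := isUnit_iff_exists_inv.mp hdet
  have ht : t = 1 ∨ t = 3 := by
    have hts : t * (t * t * s) = 1 := by rw [← hs]; ring
    exact unit_one_or_three _ _ hts
  have hNt : N = t • (1 : Matrix (Fin 3) (Fin 3) R4) := by
    ext i j
    rw [hNij]
    by_cases hij : i = j <;> simp [Matrix.one_apply, hij]
  rcases ht with rfl | rfl
  · left
    apply Units.ext
    show N = _
    rw [hNt, one_smul]
    rfl
  · right
    apply Units.ext
    show N = _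
    rw [hNt]
    show _ = -(1 : Matrix (Fin 3) (Fin 3) R4)
    ext i j
    simp [Matrix.one_apply]
    split <;> decide


lemma pglMapPt_mk (h : GL3) (P : Submodule R4 V4) :
    pglMapPt (QuotientGroup.mk h) P = mapPt h P := rfl

end Aux


/-- PGL(3, ℤ/4ℤ) acts simply transitively (regularly) on the ordered quadrangles
of PHG(2, ℤ/4ℤ). -/
theorem pgl_regular_on_quadrangles :
    ∀ Q₁ Q₂ : Fin 4 → Submodule R4 (Fin 3 → R4), IsQuadrangleT Q₁ → IsQuadrangleT Q₂ →
      ∃! g : PGL3, ∀ i, pglMapPt g (Q₁ i) = Q₂ i := by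
  intro Q₁ Q₂ hQ₁ hQ₂
  obtain ⟨g₁, hg₁⟩ := exists_map_std Q₁ hQ₁
  obtain ⟨g₂, hg₂⟩ := exists_map_std Q₂ hQ₂
  have hback : ∀ i, mapPt g₁⁻¹ (Q₁ i) = Submodule.span R4 {stdv i} := by
    intro i
    rw [← hg₁ i, mapPt_inv_cancel]
  have key : ∀ h : GL3, (∀ i, mapPt h (Q₁ i) = Q₂ i) →
      QuotientGroup.mk (s := pmOne) h = QuotientGroup.mk (g₂ * g₁⁻¹) := by
    intro h hh
    have hstab : ∀ i, mapPt (g₂⁻¹ * h * g₁) (Submodule.span R4 {stdv i})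
        = Submodule.span R4 {stdv i} := by
      intro i
      rw [mapPt_mul, mapPt_mul, hg₁ i, hh i, ← hg₂ i, mapPt_inv_cancel]
    have hmem : g₂⁻¹ * h * g₁ ∈ pmOne := stab_std _ hstab
    have hmem2 : (g₂ * g₁⁻¹)⁻¹ * h ∈ pmOne := by
      have heq : (g₂ * g₁⁻¹)⁻¹ * h = g₁ * (g₂⁻¹ * h * g₁) * g₁⁻¹ := by group
      rw [heq]
      exact Subgroup.Normal.conj_mem (inferInstance : pmOne.Normal) _ hmem g₁
    exact ((QuotientGroup.eq (s := pmOne)).mpr hmem2).symm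
  refine ⟨QuotientGroup.mk (g₂ * g₁⁻¹), ?_, ?_⟩
  · intro i
    rw [pglMapPt_mk, mapPt_mul, hback i, hg₂ i]
  · intro g hg
    induction g using QuotientGroup.induction_on with
    | H h => exact key h (fun i => hg i)
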